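/- Let f = x·y·z·w·(x+y)·(y+z)·(z+w)·(w+x) ∈ S = ℂ[x,y,z,w] (the defining polynomial of the rigid Cynk–Szemberg arrangement 𝒜₁). The S-module AR(f) = {(a₁,a₂,a₃,a₄) ∈ S⁴ : a₁∂ₓf + a₂∂_yf + a₃∂_zf + a₄∂_wf = 0} is generated by four homogeneous syzygies, one of degree 2 and three of degree 3 (where a syzygy (a₁,a₂,a₃,a₄) is homogeneous of degree d if each aᵢ is homogeneous of degree d). -/

import Mathlib

open MvPolynomial

noncomputable section

/-- The polynomial ring `S = ℂ[x,y,z,w]`, with `x = X 0`, `y = X 1`, `z = X 2`, `w = X 3`. -/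
abbrev S4 : Type := MvPolynomial (Fin 4) ℂ

/-- The linear form `c₀·x + c₁·y + c₂·z + c₃·w` with coefficient vector `c`. -/
noncomputable def linForm (c : Fin 4 → ℂ) : S4 := ∑ i, C (c i) * X i

/-- A polynomial derivation `θ = a₁∂ₓ + a₂∂_y + a₃∂_z + a₄∂_w` of `S` is identified with
its coefficient tuple `a : Fin 4 → S`; the linear map `derMap f` sends `a` to `θ(f)`. -/
noncomputable def derMap (f : S4) : (Fin 4 → S4) →ₗ[S4] S4 where
  toFun a := ∑ i, a i * pderiv i f
  map_add' a b := by simp [add_mul, Finset.sum_add_distrib]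
  map_smul' c a := by simp [Finset.mul_sum, mul_assoc]

/-- The derivation module `D(𝒜)` of the central arrangement whose hyperplanes are the kernels
of the linear forms `linForm (α H)`: all derivations `θ` with `θ(α_H) ∈ S·α_H` for every `H`. -/
noncomputable def derivModule {ι : Type} (α : ι → (Fin 4 → ℂ)) :
    Submodule S4 (Fin 4 → S4) :=
  ⨅ H, Submodule.comap (derMap (linForm (α H))) (Ideal.span {linForm (α H)})

end

/-- The defining polynomial of the rigid Cynk–Szemberg arrangement 𝒜₁:
`f = xyzw(x+y)(y+z)(z+w)(w+x)`. -/
noncomputable def fQ1 : S4 :=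
  X 0 * X 1 * X 2 * X 3 * (X 0 + X 1) * (X 1 + X 2) * (X 2 + X 3) * (X 3 + X 0)

/-!
If `θ(f) = 0`, then `θ(ℓ) ∈ (ℓ)` for each of the eight linear factors `ℓ` of `f`, since they are
pairwise non-associated primes. Tangency to the coordinate hyperplanes gives `θ = Σ cᵢ xᵢ ∂ᵢ`,
and tangency to `x+y, y+z, z+w, w+x` makes `c₁ - c₂, c₂ - c₃, c₃ - c₄, c₄ - c₁` multiples
`(x+y)u₁, …, (w+x)u₄`, so that `u` is a syzygy of these four forms. For such `θ` the logarithmic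
derivative `θ(f)/f = Σ θ(ℓ)/ℓ` equals `8c₁ - E(u)` with `E` linear, so `AR(f)` is the image of
the syzygy module of `(x+y, y+z, z+w, w+x)` under an `S`-linear map raising degrees by `2`.
As `(x+y) - (y+z) + (z+w) - (w+x) = 0` and `x+y, y+z, z+w` are coordinates, that syzygy module is
generated by one constant relation and three Koszul relations.
-/

namespace Derivation

variable {R A : Type*} [CommSemiring R]

theorem apply_prod_of_apply_eq_mul {ι : Type*} [CommSemiring A] [Algebra R A]
    (D : Derivation R A A) (s : Finset ι) {ℓ q : ι → A} (h : ∀ k ∈ s, D (ℓ k) = ℓ k * q k) :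
    D (∏ k ∈ s, ℓ k) = (∏ k ∈ s, ℓ k) * ∑ k ∈ s, q k := by
  classical
  induction s using Finset.induction_on with
  | empty => simp
  | insert k s hk ih =>
    rw [Finset.prod_insert hk, Finset.sum_insert hk, leibniz, smul_eq_mul, smul_eq_mul,
      h k (Finset.mem_insert_self k s), ih fun j hj => h j (Finset.mem_insert_of_mem hj)]
    ring

theorem dvd_apply_of_apply_mul_eq_zero [CommRing A] [Algebra R A] (D : Derivation R A A)
    {p h : A} (hp : Prime p) (hph : ¬ p ∣ h) (hD : D (p * h) = 0) : p ∣ D p := by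
  have : p ∣ D p * h := ⟨-D h, by
    rw [leibniz, smul_eq_mul, smul_eq_mul] at hD
    linear_combination hD⟩
  exact (hp.dvd_or_dvd this).resolve_right hph

end Derivation

theorem dvd_sub_of_dvd_mul_add_mul {A : Type*} [CommRing A] {x y p q : A} (hxy : Prime (x + y))
    (hx : ¬ x + y ∣ x) (h : x + y ∣ x * p + y * q) : x + y ∣ p - q := by
  have : x + y ∣ x * (p - q) := by
    convert dvd_sub h (dvd_mul_right (x + y) q) using 1
    ring
  exact (hxy.dvd_or_dvd this).resolve_left hx

namespace MvPolynomial

theorem prime_of_isHomogeneous_one {σ K : Type*} [Field K] {p : MvPolynomial σ K}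
    (hp : p.IsHomogeneous 1) (hp0 : p ≠ 0) : Prime p := by
  refine (irreducible_of_totalDegree_eq_one (hp.totalDegree hp0) fun x hx => ?_).prime
  obtain ⟨m, hm⟩ := ne_zero_iff.mp hp0
  exact isUnit_of_dvd_unit (hx m) (Ne.isUnit hm)

theorem IsHomogeneous.mul_of_degree_one {σ R : Type*} [CommSemiring R] {ℓ p : MvPolynomial σ R}
    {n : ℕ} (hℓ : ℓ.IsHomogeneous 1) (hp : p.IsHomogeneous n) : (ℓ * p).IsHomogeneous (n + 1) :=
  add_comm 1 n ▸ hℓ.mul hp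

variable {σ R : Type*} [CommRing R]

theorem X_dvd_sub_aeval_update_zero [DecidableEq σ] (i : σ) (p : MvPolynomial σ R) :
    X i ∣ p - aeval (Function.update X i 0) p := by
  induction p using MvPolynomial.induction_on with
  | C a => simp
  | add p q hp hq => simpa [add_sub_add_comm] using dvd_add hp hq
  | mul_X p j hp =>
    by_cases hj : j = i
    · subst hj
      simp
    · rw [map_mul, aeval_X, Function.update_of_ne hj, ← sub_mul]
      exact hp.mul_right _

variable [IsDomain R]

theorem exists_of_mul_X_add_mul_X_eq_zero {i j : σ} (hij : i ≠ j) {p q : MvPolynomial σ R}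
    (h : p * X i + q * X j = 0) : ∃ s, p = s * X j ∧ q = -s * X i := by
  classical
  set φ := aeval (R := R) (Function.update (X : σ → MvPolynomial σ R) j 0)
  obtain ⟨s, hs⟩ := X_dvd_sub_aeval_update_zero j p
  have hkill : φ p = 0 := by
    simpa [φ, Function.update_of_ne hij, X_ne_zero] using congrArg φ h
  rw [hkill, sub_zero] at hs
  refine ⟨s, by rw [hs, mul_comm], mul_right_cancel₀ (X_ne_zero j) ?_⟩
  linear_combination h - X i * hs

theorem exists_of_mul_X_add_mul_X_add_mul_X_eq_zero {i j k : σ} (hij : i ≠ j) (hik : i ≠ k)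
    (hjk : j ≠ k) {p q r : MvPolynomial σ R} (h : p * X i + q * X j + r * X k = 0) :
    ∃ s t u, p = s * X j + t * X k ∧ q = -s * X i + u * X k ∧ r = -t * X i - u * X j := by
  classical
  set φ := aeval (R := R) (Function.update (X : σ → MvPolynomial σ R) k 0)
  obtain ⟨t, ht⟩ := X_dvd_sub_aeval_update_zero k p
  obtain ⟨u, hu⟩ := X_dvd_sub_aeval_update_zero k q
  have hkill : φ p * X i + φ q * X j = 0 := by
    simpa [φ, Function.update_of_ne hik, Function.update_of_ne hjk] using congrArg φ h
  obtain ⟨s, hps, hqs⟩ := exists_of_mul_X_add_mul_X_eq_zero hij hkill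
  refine ⟨s, t, u, by linear_combination ht + hps, by linear_combination hu + hqs,
    mul_right_cancel₀ (X_ne_zero k) ?_⟩
  linear_combination h - hkill - X i * ht - X j * hu

end MvPolynomial

noncomputable section

def toDerivation (a : Fin 4 → S4) : Derivation ℂ S4 S4 := ∑ i, a i • pderiv i

theorem derMap_eq_toDerivation (f : S4) (a : Fin 4 → S4) : derMap f a = toDerivation a f := by
  rw [toDerivation, ← Derivation.coeFnAddMonoidHom_apply, map_sum, Finset.sum_apply]
  simp [derMap]

theorem toDerivation_X (a : Fin 4 → S4) (i : Fin 4) : toDerivation a (X i) = a i := by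
  simp [← derMap_eq_toDerivation, derMap, pderiv_X, Pi.single_apply]

def linearFactor : Fin 8 → S4 :=
  ![X 0, X 1, X 2, X 3, X 0 + X 1, X 1 + X 2, X 2 + X 3, X 3 + X 0]

theorem fQ1_eq_prod : fQ1 = ∏ k, linearFactor k := by
  simp [fQ1, linearFactor, Fin.prod_univ_eight]

theorem prime_linearFactor (k : Fin 8) : Prime (linearFactor k) := by
  refine prime_of_isHomogeneous_one ?_ fun h => ?_
  · fin_cases k <;> simp only [linearFactor] <;> simp <;>
      apply_rules [IsHomogeneous.add, isHomogeneous_X]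
  · fin_cases k <;> simpa [linearFactor] using congrArg (eval 1) h

theorem exists_eval_linearFactor (k : Fin 8) :
    ∃ v : Fin 4 → ℂ, eval v (linearFactor k) = 0 ∧ ∀ j ≠ k, eval v (linearFactor j) ≠ 0 := by
  fin_cases k <;>
    [use ![0, 1, 1, 1]; use ![1, 0, 1, 1]; use ![1, 1, 0, 1]; use ![1, 1, 1, 0];
     use ![2, -2, 1, 3]; use ![1, 2, -2, 3]; use ![3, 1, 2, -2]; use ![2, 1, 3, -2]] <;>
    refine ⟨by simp [linearFactor], fun j hj => ?_⟩ <;>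
    fin_cases j <;> simp_all [linearFactor] <;> norm_num

theorem linearFactor_not_dvd {j k : Fin 8} (hjk : j ≠ k) :
    ¬ linearFactor k ∣ linearFactor j := by
  obtain ⟨v, hk, hj⟩ := exists_eval_linearFactor k
  exact fun h => hj j hjk (zero_dvd_iff.mp (hk ▸ map_dvd (eval v) h))

theorem fQ1_ne_zero : fQ1 ≠ 0 := by
  rw [fQ1_eq_prod, Finset.prod_ne_zero_iff]
  exact fun k _ => (prime_linearFactor k).ne_zero

theorem linearFactor_dvd_toDerivation {a : Fin 4 → S4} (ha : derMap fQ1 a = 0) (k : Fin 8) :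
    linearFactor k ∣ toDerivation a (linearFactor k) := by
  classical
  refine (toDerivation a).dvd_apply_of_apply_mul_eq_zero (prime_linearFactor k)
    (h := ∏ j ∈ Finset.univ.erase k, linearFactor j) ?_ ?_
  · rw [(prime_linearFactor k).dvd_finsetProd_iff]
    rintro ⟨j, hj, hdvd⟩
    exact linearFactor_not_dvd (Finset.ne_of_mem_erase hj) hdvd
  · rw [Finset.mul_prod_erase _ _ (Finset.mem_univ k), ← fQ1_eq_prod, ← derMap_eq_toDerivation,
      ha]

def syzygyMap : (Fin 4 → S4) →ₗ[S4] S4 :=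
  Fintype.linearCombination S4 ![X 0 + X 1, X 1 + X 2, X 2 + X 3, X 3 + X 0]

theorem syzygyMap_apply (u : Fin 4 → S4) : syzygyMap u =
    u 0 * (X 0 + X 1) + u 1 * (X 1 + X 2) + u 2 * (X 2 + X 3) + u 3 * (X 3 + X 0) := by
  simp [syzygyMap, Fintype.linearCombination_apply, Fin.sum_univ_four]

def telescopingVec (c : S4) (u : Fin 4 → S4) : Fin 4 → S4 :=
  ![X 0 * c,
    X 1 * (c - (X 0 + X 1) * u 0),
    X 2 * (c - (X 0 + X 1) * u 0 - (X 1 + X 2) * u 1),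
    X 3 * (c - (X 0 + X 1) * u 0 - (X 1 + X 2) * u 1 - (X 2 + X 3) * u 2)]

def logDerivCorrection (u : Fin 4 → S4) : S4 :=
  (C 6 * (X 0 + X 1) + X 1) * u 0 + (C 4 * (X 1 + X 2) + X 2) * u 1 +
    (C 2 * (X 2 + X 3) + X 3) * u 2 + X 0 * u 3

theorem derMap_fQ1_telescopingVec (c : S4) {u : Fin 4 → S4} (hu : syzygyMap u = 0) :
    derMap fQ1 (telescopingVec c u) = fQ1 * (8 * c - logDerivCorrection u) := by
  rw [syzygyMap_apply] at hu
  set c₁ := c - (X 0 + X 1) * u 0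
  set c₂ := c₁ - (X 1 + X 2) * u 1
  set c₃ := c₂ - (X 2 + X 3) * u 2
  -- `θ(ℓₖ) / ℓₖ` for the eight factors; only the last quotient needs the syzygy `hu`
  rw [derMap_eq_toDerivation, fQ1_eq_prod, (toDerivation _).apply_prod_of_apply_eq_mul _
    (q := ![c, c₁, c₂, c₃, c - X 1 * u 0, c₁ - X 2 * u 1, c₂ - X 3 * u 2, c₃ - X 0 * u 3])]
  · congr 1
    simp only [Fin.isValue, Fin.sum_univ_eight, Matrix.cons_val_zero, Matrix.cons_val_one,
      Matrix.cons_val, logDerivCorrection, map_ofNat, c₁, c₂, c₃]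
    ring
  · intro k _
    fin_cases k <;> simp [linearFactor, toDerivation_X, telescopingVec, c₁, c₂, c₃] <;>
      first | ring1 | linear_combination X 0 * hu

def syzygyToAR : (Fin 4 → S4) →ₗ[S4] (Fin 4 → S4) where
  toFun u := telescopingVec (C 8⁻¹ * logDerivCorrection u) u
  map_add' u v := by
    funext i
    fin_cases i <;> simp [telescopingVec, logDerivCorrection] <;> ring
  map_smul' r u := by
    funext i
    fin_cases i <;> simp [telescopingVec, logDerivCorrection] <;> ring

theorem syzygyToAR_apply (u : Fin 4 → S4) :
    syzygyToAR u = telescopingVec (C 8⁻¹ * logDerivCorrection u) u :=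
  rfl

theorem C_inv_eight_mul_eight : (C 8⁻¹ : S4) * 8 = 1 := by
  rw [← map_ofNat C 8, ← C_mul, inv_mul_cancel₀ (by norm_num), C_1]

theorem derMap_fQ1_syzygyToAR {u : Fin 4 → S4} (hu : syzygyMap u = 0) :
    derMap fQ1 (syzygyToAR u) = 0 := by
  rw [syzygyToAR_apply, derMap_fQ1_telescopingVec _ hu]
  linear_combination fQ1 * logDerivCorrection u * C_inv_eight_mul_eight

theorem exists_telescopingVec_of_derMap_fQ1_eq_zero {a : Fin 4 → S4} (ha : derMap fQ1 a = 0) :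
    ∃ c u, syzygyMap u = 0 ∧ a = telescopingVec c u := by
  have hdvd := linearFactor_dvd_toDerivation ha
  obtain ⟨c₀, hc₀⟩ : X 0 ∣ a 0 := by simpa [linearFactor, toDerivation_X] using hdvd 0
  obtain ⟨c₁, hc₁⟩ : X 1 ∣ a 1 := by simpa [linearFactor, toDerivation_X] using hdvd 1
  obtain ⟨c₂, hc₂⟩ : X 2 ∣ a 2 := by simpa [linearFactor, toDerivation_X] using hdvd 2
  obtain ⟨c₃, hc₃⟩ : X 3 ∣ a 3 := by simpa [linearFactor, toDerivation_X] using hdvd 3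
  have h₄ : X 0 + X 1 ∣ X 0 * c₀ + X 1 * c₁ := by
    simpa [linearFactor, toDerivation_X, hc₀, hc₁] using hdvd 4
  have h₅ : X 1 + X 2 ∣ X 1 * c₁ + X 2 * c₂ := by
    simpa [linearFactor, toDerivation_X, hc₁, hc₂] using hdvd 5
  have h₆ : X 2 + X 3 ∣ X 2 * c₂ + X 3 * c₃ := by
    simpa [linearFactor, toDerivation_X, hc₂, hc₃] using hdvd 6
  have h₇ : X 3 + X 0 ∣ X 3 * c₃ + X 0 * c₀ := by
    simpa [linearFactor, toDerivation_X, hc₃, hc₀] using hdvd 7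
  obtain ⟨u₀, hu₀⟩ := dvd_sub_of_dvd_mul_add_mul (prime_linearFactor 4)
    (linearFactor_not_dvd (j := 0) (k := 4) (by decide)) h₄
  obtain ⟨u₁, hu₁⟩ := dvd_sub_of_dvd_mul_add_mul (prime_linearFactor 5)
    (linearFactor_not_dvd (j := 1) (k := 5) (by decide)) h₅
  obtain ⟨u₂, hu₂⟩ := dvd_sub_of_dvd_mul_add_mul (prime_linearFactor 6)
    (linearFactor_not_dvd (j := 2) (k := 6) (by decide)) h₆
  obtain ⟨u₃, hu₃⟩ := dvd_sub_of_dvd_mul_add_mul (prime_linearFactor 7)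
    (linearFactor_not_dvd (j := 3) (k := 7) (by decide)) h₇
  refine ⟨c₀, ![u₀, u₁, u₂, u₃], ?_, ?_⟩
  · simp only [syzygyMap_apply, Fin.isValue, Matrix.cons_val_zero, Matrix.cons_val_one,
      Matrix.cons_val]
    linear_combination -hu₀ - hu₁ - hu₂ - hu₃
  · funext i
    fin_cases i <;>
      simp only [Fin.zero_eta, Fin.mk_one, Fin.reduceFinMk, Fin.isValue, telescopingVec,
        Matrix.cons_val_zero, Matrix.cons_val_one, Matrix.cons_val]
    · exact hc₀
    · linear_combination hc₁ - X 1 * hu₀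
    · linear_combination hc₂ - X 2 * hu₀ - X 2 * hu₁
    · linear_combination hc₃ - X 3 * hu₀ - X 3 * hu₁ - X 3 * hu₂

theorem ker_derMap_fQ1 :
    LinearMap.ker (derMap fQ1) = (LinearMap.ker syzygyMap).map syzygyToAR := by
  ext a
  constructor
  · intro ha
    obtain ⟨c, u, hu, rfl⟩ := exists_telescopingVec_of_derMap_fQ1_eq_zero ha
    have hc : 8 * c - logDerivCorrection u = 0 :=
      (mul_eq_zero.mp ((derMap_fQ1_telescopingVec c hu).symm.trans ha)).resolve_left fQ1_ne_zero
    refine ⟨u, hu, ?_⟩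
    rw [syzygyToAR_apply]
    congr 1
    linear_combination (-C 8⁻¹) * hc + c * C_inv_eight_mul_eight
  · rintro ⟨u, hu, rfl⟩
    exact derMap_fQ1_syzygyToAR hu

def shearEquiv : S4 ≃ₐ[ℂ] S4 :=
  AlgEquiv.ofAlgHom (aeval ![X 0 + X 1, X 1 + X 2, X 2 + X 3, X 3])
    (aeval ![X 0 - X 1 + X 2 - X 3, X 1 - X 2 + X 3, X 2 - X 3, X 3])
    (algHom_ext fun i => by fin_cases i <;> simp <;> ring)
    (algHom_ext fun i => by fin_cases i <;> simp)

theorem exists_of_syzygy_consecutiveSums {p q r : S4}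
    (h : p * (X 0 + X 1) + q * (X 1 + X 2) + r * (X 2 + X 3) = 0) :
    ∃ s t w, p = s * (X 1 + X 2) + t * (X 2 + X 3) ∧ q = -s * (X 0 + X 1) + w * (X 2 + X 3) ∧
      r = -t * (X 0 + X 1) - w * (X 1 + X 2) := by
  have h₀ : shearEquiv (X 0) = X 0 + X 1 := by simp [shearEquiv]
  have h₁ : shearEquiv (X 1) = X 1 + X 2 := by simp [shearEquiv]
  have h₂ : shearEquiv (X 2) = X 2 + X 3 := by simp [shearEquiv]
  rw [← h₀, ← h₁, ← h₂] at h ⊢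
  have h' := congrArg shearEquiv.symm h
  simp only [map_add, map_mul, map_zero, AlgEquiv.symm_apply_apply] at h'
  obtain ⟨s, t, w, hp, hq, hr⟩ := exists_of_mul_X_add_mul_X_add_mul_X_eq_zero
    (by decide) (by decide) (by decide) h'
  refine ⟨shearEquiv s, shearEquiv t, shearEquiv w, ?_, ?_, ?_⟩
  · simpa using congrArg shearEquiv hp
  · simpa using congrArg shearEquiv hq
  · simpa using congrArg shearEquiv hr

def syzygyGen : Fin 4 → Fin 4 → S4 :=
  ![![-1, 1, -1, 1],
    ![X 1 + X 2, -(X 0 + X 1), 0, 0],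
    ![X 2 + X 3, 0, -(X 0 + X 1), 0],
    ![0, X 2 + X 3, -(X 1 + X 2), 0]]

theorem ker_syzygyMap : LinearMap.ker syzygyMap = Submodule.span S4 (Set.range syzygyGen) := by
  apply le_antisymm
  · intro u hu
    rw [LinearMap.mem_ker, syzygyMap_apply] at hu
    obtain ⟨s, t, w, h₀, h₁, h₂⟩ :=
      exists_of_syzygy_consecutiveSums (p := u 0 + u 3) (q := u 1 - u 3) (r := u 2 + u 3)
        (by linear_combination hu)
    rw [Submodule.mem_span_range_iff_exists_fun]
    refine ⟨![u 3, s, t, w], funext fun i => ?_⟩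
    fin_cases i <;> simp [Fin.sum_univ_four, syzygyGen]
    · linear_combination -h₀
    · linear_combination -h₁
    · linear_combination -h₂
  · rw [Submodule.span_le]
    rintro _ ⟨j, rfl⟩
    fin_cases j <;> simp [syzygyMap_apply, syzygyGen] <;> ring

theorem isHomogeneous_syzygyGen (j i : Fin 4) :
    (syzygyGen j i).IsHomogeneous (![0, 1, 1, 1] j) := by
  fin_cases j <;> fin_cases i <;> simp only [syzygyGen] <;> simp <;>
    apply_rules [IsHomogeneous.add, IsHomogeneous.neg, isHomogeneous_X, isHomogeneous_zero,
      isHomogeneous_one]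

theorem isHomogeneous_syzygyToAR {u : Fin 4 → S4} {d : ℕ} (hu : ∀ i, (u i).IsHomogeneous d)
    (i : Fin 4) : (syzygyToAR u i).IsHomogeneous (d + 2) := by
  have hX := isHomogeneous_X ℂ (σ := Fin 4)
  have hℓ (i j : Fin 4) : (X i + X j : S4).IsHomogeneous 1 := (hX i).add (hX j)
  have hE : (logDerivCorrection u).IsHomogeneous (d + 1) :=
    (((((hℓ 0 1).C_mul 6).add (hX 1)).mul_of_degree_one (hu 0)).add
      ((((hℓ 1 2).C_mul 4).add (hX 2)).mul_of_degree_one (hu 1))).add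
      ((((hℓ 2 3).C_mul 2).add (hX 3)).mul_of_degree_one (hu 2)) |>.add
      ((hX 0).mul_of_degree_one (hu 3))
  have h₀ := hE.C_mul 8⁻¹
  have h₁ := h₀.sub ((hℓ 0 1).mul_of_degree_one (hu 0))
  have h₂ := h₁.sub ((hℓ 1 2).mul_of_degree_one (hu 1))
  have h₃ := h₂.sub ((hℓ 2 3).mul_of_degree_one (hu 2))
  fin_cases i
  exacts [(hX 0).mul_of_degree_one h₀, (hX 1).mul_of_degree_one h₁, (hX 2).mul_of_degree_one h₂,
    (hX 3).mul_of_degree_one h₃]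

end

/-- The module `AR(f) = {(a₁,a₂,a₃,a₄) : a₁∂ₓf + a₂∂_yf + a₃∂_zf + a₄∂_wf = 0}`
for `f = xyzw(x+y)(y+z)(z+w)(w+x)` is generated by four homogeneous syzygies, one of degree `2`
and three of degree `3`. -/
theorem AR_Q1_generators :
    ∃ g : Fin 4 → (Fin 4 → S4),
      Submodule.span S4 (Set.range g) = LinearMap.ker (derMap fQ1) ∧
      ∀ j : Fin 4, ∀ i : Fin 4, (g j i).IsHomogeneous (![2,3,3,3] j) := by
  refine ⟨syzygyToAR ∘ syzygyGen, ?_, fun j i => ?_⟩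
  · rw [ker_derMap_fQ1, ker_syzygyMap, Submodule.map_span, Set.range_comp]
  · have := isHomogeneous_syzygyToAR (isHomogeneous_syzygyGen j) i
    fin_cases j <;> exact this
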